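/- Let x₁, x₂, x₃, x₄ ∈ ℝ³ with every three of them linearly independent, and suppose there are nonnegative weights w₁,…,w₄, not all zero, with ∑ᵢ wᵢxᵢ = 0. Then for any choice of distinct indices i, j and the remaining indices k, l, one has det(xᵢ,xⱼ,x_k) · det(xᵢ,xⱼ,x_l) < 0. -/

import Mathlib

/-!
If a weight `w l` vanished, the remaining three vectors, which are linearly independent, would
carry a nontrivial relation; hence all weights are positive. Applying the linear form
`v ↦ det(x i, x j, v)` to `∑ w m • x m = 0` kills the terms of `x i` and `x j` and leaves
`w k * det(x i, x j, x k) + w l * det(x i, x j, x l) = 0`, with `w k, w l > 0` and the first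
determinant nonzero, so the two determinants have opposite signs.
-/

noncomputable def det3 (a b c : Fin 3 → ℝ) : ℝ := Matrix.det (Matrix.transpose (Matrix.of ![a, b, c]))

open Matrix

theorem det3_eq_cross_dotProduct (a b c : Fin 3 → ℝ) : det3 a b c = a ⨯₃ b ⬝ᵥ c := by
  rw [det3, det_transpose, dotProduct_comm, triple_product_permutation, triple_product_eq_det]
  rfl

theorem det3_ne_zero {a b c : Fin 3 → ℝ} (h : LinearIndependent ℝ ![a, b, c]) :
    det3 a b c ≠ 0 := by
  rw [det3, det_transpose, ← isUnit_iff_ne_zero, ← isUnit_iff_isUnit_det,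
    ← linearIndependent_rows_iff_isUnit]
  exact h

theorem sum_mul_det3_eq_zero {ι : Type*} [Fintype ι] (a b : Fin 3 → ℝ) {x : ι → Fin 3 → ℝ}
    {w : ι → ℝ} (hsum : ∑ m, w m • x m = 0) : ∑ m, w m * det3 a b (x m) = 0 := by
  calc ∑ m, w m * det3 a b (x m) = a ⨯₃ b ⬝ᵥ ∑ m, w m • x m := by
        simp only [det3_eq_cross_dotProduct, dotProduct_sum, dotProduct_smul, smul_eq_mul]
    _ = 0 := by rw [hsum, dotProduct_zero]

theorem ne_zero_of_sum_smul_eq_zero {ι R M : Type*} [Fintype ι] [Ring R] [AddCommGroup M]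
    [Module R M] {x : ι → M} {w : ι → R} {l : ι}
    (hx : LinearIndependent R fun m : {m // m ≠ l} => x m) (hw : w ≠ 0)
    (hsum : ∑ m, w m • x m = 0) : w l ≠ 0 := by
  classical
  intro hl
  rw [Fintype.sum_eq_add_sum_subtype_ne _ l, hl, zero_smul, zero_add] at hsum
  have hrest := Fintype.linearIndependent_iff.1 hx (fun m => w m) hsum
  exact hw (funext fun m => if h : m = l then h ▸ hl else hrest ⟨m, h⟩)

theorem linearIndependent_subtype_ne_of_triples {R M : Type*} [Ring R] [AddCommGroup M]
    [Module R M] {x : Fin 4 → M}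
    (hindep : ∀ i j k : Fin 4, i ≠ j → i ≠ k → j ≠ k → LinearIndependent R ![x i, x j, x k])
    (l : Fin 4) : LinearIndependent R fun m : {m // m ≠ l} => x m := by
  have hne {s t : Fin 3} (h : s ≠ t) : l.succAbove s ≠ l.succAbove t :=
    Fin.succAbove_right_injective.ne h
  rw [← linearIndependent_equiv (finSuccAboveEquiv l)]
  convert hindep _ _ _ (hne (by decide : (0 : Fin 3) ≠ 1)) (hne (by decide : (0 : Fin 3) ≠ 2))
    (hne (by decide : (1 : Fin 3) ≠ 2)) using 1
  ext t : 1
  fin_cases t <;> rfl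

theorem mul_neg_of_pos_combination_eq_zero {K : Type*} [CommRing K] [LinearOrder K]
    [IsStrictOrderedRing K] {p q D E : K} (hp : 0 < p) (hq : 0 < q) (hD : D ≠ 0)
    (h : p * D + q * E = 0) : D * E < 0 := by
  have hqDE : q * (D * E) = -(p * D ^ 2) := by linear_combination D * h
  have : q * (D * E) < 0 := by
    rw [hqDE, neg_lt_zero]
    exact mul_pos hp (pow_two_pos_of_ne_zero hD)
  exact neg_of_mul_neg_right this hq.le

theorem weights_imply_separation (x : Fin 4 → (Fin 3 → ℝ))
    (hindep : ∀ i j k : Fin 4, i ≠ j → i ≠ k → j ≠ k →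
      LinearIndependent ℝ ![x i, x j, x k])
    (w : Fin 4 → ℝ) (hw : ∀ i, 0 ≤ w i) (hw0 : ∃ i, w i ≠ 0)
    (hsum : ∑ i, w i • x i = 0) :
    ∀ i j k l : Fin 4, i ≠ j → i ≠ k → i ≠ l → j ≠ k → j ≠ l → k ≠ l →
      det3 (x i) (x j) (x k) * det3 (x i) (x j) (x l) < 0 := by
  intro i j k l hij hik hil hjk hjl hkl
  have hw_pos (m : Fin 4) : 0 < w m :=
    (hw m).lt_of_ne' <| ne_zero_of_sum_smul_eq_zero
      (linearIndependent_subtype_ne_of_triples hindep m) (Function.ne_iff.2 hw0) hsum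
  have hcomb : w k * det3 (x i) (x j) (x k) + w l * det3 (x i) (x j) (x l) = 0 := by
    refine (Fintype.sum_eq_add k l hkl ?_).symm.trans (sum_mul_det3_eq_zero _ _ hsum)
    rintro m ⟨hmk, hml⟩
    obtain rfl | rfl : m = i ∨ m = j := by omega
    all_goals simp only [det3_eq_cross_dotProduct, dotProduct_comm _ (x m), dot_self_cross,
      dot_cross_self, mul_zero]
  exact mul_neg_of_pos_combination_eq_zero (hw_pos k) (hw_pos l)
    (det3_ne_zero (hindep i j k hij hik hjk)) hcomb
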